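/- Let (Y_n)_{n≥1} be a sequence of independent integrable real-valued random variables, μ ∈ ℝ, and S_k = Y_1 + ⋯ + Y_k. Suppose (d_n) is a sequence of positive numbers such that there exist constants c > 0, γ > 0 and n₀ ≥ 1 with d_l/d_k ≥ c·(l/k)^γ for all l ≥ k ≥ n₀, and there exist constants C₀ > 0, γ' ∈ (0, γ) and ε ∈ (0,1) with E| (S_n − μn)/d_n | ≤ C₀·exp(γ'(log n)^{1−ε}) for all n ≥ 1. Then there is a constant C > 0 such that for all n ≥ 1, E[ (1/d_n)·max_{1≤k≤n} | Σ_{j=1}^k log((n+1)/j)·(Y_j − μ) | ] ≤ C·log n·exp(γ'(log n)^{1−ε}). -/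

import Mathlib

/-!
Summation by parts writes `∑_{j ≤ k} a_j (Y_j - μ)`, for the decreasing weights
`a_j = log ((n + 1) / j) ≥ 1`, as a combination of the centred sums `S_j - μ j`, `j ≤ k`, with
nonnegative coefficients of total mass `a_1 = log (n + 1) ≤ 2 log n`. The growth condition makes
`d` quasi-increasing (`d_j ≤ M d_n` for `j ≤ n`), so the moment bound gives
`E|S_j - μ j| ≤ M C₀ d_n exp (γ' (log n)^(1-ε))` for every `j ≤ n`, hence the same bound,
times `2 log n`, for every weighted partial sum. Ottaviani's inequality for the independent
summands `a_j (Y_j - μ)` turns it, in its L¹ form `E max_k |W_k| ≤ 6 max_k E|W_k|`, into a bound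
for the maximum.
-/

open MeasureTheory ProbabilityTheory Filter
open scoped ENNReal NNReal

noncomputable def clog (x : ℝ) : ℝ := Real.log (max x (Real.exp 1))

open Finset

lemma one_le_clog (x : ℝ) : 1 ≤ clog x :=
  (Real.le_log_iff_exp_le (by positivity)).2 (le_max_right _ _)

lemma clog_mono : Monotone clog := fun _ _ h =>
  Real.log_le_log (by positivity) (max_le_max_right _ h)

lemma clog_add_one_le (x : ℝ) : clog (x + 1) ≤ 2 * clog x := by
  have he : 2 < Real.exp 1 := lt_trans (by norm_num) Real.exp_one_gt_d9
  have hm : Real.exp 1 ≤ max x (Real.exp 1) := le_max_right _ _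
  rw [clog, clog, ← Nat.cast_ofNat, ← Real.log_pow]
  refine Real.log_le_log (by positivity) (max_le ?_ ?_)
  · nlinarith [le_max_left x (Real.exp 1)]
  · nlinarith

lemma antitoneOn_clog_div {x : ℝ} (hx : 0 ≤ x) :
    AntitoneOn (fun j : ℕ => clog (x / j)) (Set.Ici 1) := fun i hi j _ hij =>
  clog_mono (div_le_div_of_nonneg_left hx (by exact_mod_cast hi) (by exact_mod_cast hij))

lemma exp_mul_clog_rpow_le {γ' ε x y : ℝ} (hγ' : 0 ≤ γ') (hε : ε ≤ 1) (hxy : x ≤ y) :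
    Real.exp (γ' * clog x ^ (1 - ε)) ≤ Real.exp (γ' * clog y ^ (1 - ε)) :=
  Real.exp_le_exp.2 <| mul_le_mul_of_nonneg_left
    (Real.rpow_le_rpow (zero_le_one.trans (one_le_clog _)) (clog_mono hxy) (by linarith)) hγ'

lemma sub_succ_nonneg_of_antitoneOn {a : ℕ → ℝ} (ha : AntitoneOn a (Set.Ici 1)) {j : ℕ}
    (hj : 1 ≤ j) : 0 ≤ a j - a (j + 1) :=
  sub_nonneg.2 <| ha (Set.mem_Ici.2 hj) (Set.mem_Ici.2 (by omega)) (Nat.le_succ j)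

lemma sum_Icc_mul_by_parts (a x : ℕ → ℝ) (k : ℕ) :
    ∑ j ∈ Icc 1 k, a j * x j =
      ∑ j ∈ Icc 1 k, (a j - a (j + 1)) * ∑ i ∈ Icc 1 j, x i +
        a (k + 1) * ∑ i ∈ Icc 1 k, x i := by
  induction k with
  | zero => simp
  | succ k ih =>
    rw [sum_Icc_succ_top (by omega), sum_Icc_succ_top (by omega), ih, sum_Icc_succ_top (by omega)]
    ring

lemma abs_sum_Icc_mul_le {a : ℕ → ℝ} (ha : AntitoneOn a (Set.Ici 1)) (ha0 : ∀ j, 0 ≤ a j)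
    (x : ℕ → ℝ) (k : ℕ) :
    |∑ j ∈ Icc 1 k, a j * x j| ≤
      ∑ j ∈ Icc 1 k, (a j - a (j + 1)) * |∑ i ∈ Icc 1 j, x i| +
        a (k + 1) * |∑ i ∈ Icc 1 k, x i| := by
  rw [sum_Icc_mul_by_parts]
  refine (abs_add_le _ _).trans (add_le_add ((abs_sum_le_sum_abs _ _).trans_eq ?_) ?_)
  · exact sum_congr rfl fun j hj => by
      rw [abs_mul, abs_of_nonneg (sub_succ_nonneg_of_antitoneOn ha (mem_Icc.1 hj).1)]
  · rw [abs_mul, abs_of_nonneg (ha0 _)]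

lemma sum_Icc_sub_succ_add (a : ℕ → ℝ) (k : ℕ) :
    ∑ j ∈ Icc 1 k, (a j - a (j + 1)) + a (k + 1) = a 1 := by
  induction k with
  | zero => simp
  | succ k ih => rw [sum_Icc_succ_top (by omega)]; linarith

lemma exists_pos_forall_le_mul_of_le_mul {d : ℕ → ℝ} (hd : ∀ n, 0 < d n) {c : ℝ}
    (hc : 0 < c) {N : ℕ} (hN : ∀ k l, N ≤ k → k ≤ l → c * d k ≤ d l) :
    ∃ M, 0 < M ∧ ∀ j m, j ≤ m → d j ≤ M * d m := by
  set A := ∑ i ∈ range (N + 1), d i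
  set b := (range (N + 1)).inf' nonempty_range_add_one d
  have hA : ∀ j ≤ N, d j ≤ A := fun j hj =>
    single_le_sum (fun i _ => (hd i).le) (mem_range.2 (Nat.lt_succ_of_le hj))
  have hb : 0 < b := (lt_inf'_iff _).2 fun i _ => hd i
  have hlow : ∀ m, min b (c * b) ≤ d m := by
    intro m
    rcases le_or_gt m N with hm | hm
    · exact (min_le_left _ _).trans (inf'_le _ (mem_range.2 (Nat.lt_succ_of_le hm)))
    · calc min b (c * b) ≤ c * d N :=
            (min_le_right _ _).trans (by gcongr; exact inf'_le _ (self_mem_range_succ N))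
        _ ≤ d m := hN N m le_rfl hm.le
  have hL : 0 < min b (c * b) := lt_min hb (mul_pos hc hb)
  have hAL : 0 < A / min b (c * b) := div_pos ((hd 0).trans_le (hA 0 N.zero_le)) hL
  refine ⟨c⁻¹ + A / min b (c * b), add_pos (inv_pos.2 hc) hAL, fun j m hjm => ?_⟩
  have hdm := hd m
  rcases le_or_gt N j with hj | hj
  · calc d j ≤ c⁻¹ * d m := by rw [le_inv_mul_iff₀ hc]; exact hN j m hj hjm
      _ ≤ _ := by gcongr; exact le_add_of_nonneg_right hAL.le
  · calc d j ≤ A / min b (c * b) * d m := by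
          rw [div_mul_eq_mul_div, le_div_iff₀ hL]
          exact mul_le_mul (hA j hj.le) (hlow m) hL.le ((hd j).le.trans (hA j hj.le))
      _ ≤ _ := by gcongr; exact le_add_of_nonneg_left (inv_pos.2 hc).le

lemma exists_pos_forall_le_mul_of_rpow_le_div {d : ℕ → ℝ} (hd : ∀ n, 0 < d n) {c γ : ℝ}
    (hc : 0 < c) (hγ : 0 ≤ γ) {n₀ : ℕ}
    (hratio : ∀ k l : ℕ, n₀ ≤ k → k ≤ l → c * ((l : ℝ) / k) ^ γ ≤ d l / d k) :
    ∃ M, 0 < M ∧ ∀ j m, j ≤ m → d j ≤ M * d m := by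
  refine exists_pos_forall_le_mul_of_le_mul hd hc (N := max n₀ 1) fun k l hk hkl => ?_
  have hk1 : (1 : ℝ) ≤ k := by exact_mod_cast (le_max_right _ _).trans hk
  have hpow : 1 ≤ ((l : ℝ) / k) ^ γ :=
    Real.one_le_rpow ((one_le_div (by linarith)).2 (by exact_mod_cast hkl)) hγ
  have := (le_div_iff₀ (hd k)).1 (hratio k l ((le_max_left _ _).trans hk) hkl)
  nlinarith [mul_le_mul_of_nonneg_left hpow (mul_pos hc (hd k)).le]

lemma sum_Icc_one_add_sum_Ioc {M : Type*} [AddCommMonoid M] (f : ℕ → M) {k n : ℕ}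
    (h : k ≤ n) :
    ∑ j ∈ Icc 1 k, f j + ∑ j ∈ Ioc k n, f j = ∑ j ∈ Icc 1 n, f j := by
  simpa only [← Finset.Icc_add_one_left_eq_Ioc, zero_add] using
    sum_Ioc_consecutive f k.zero_le h

lemma measurableSet_disjointed_lt_abs {Ω : Type*} {m : MeasurableSpace Ω} {W : ℕ → Ω → ℝ}
    {k : ℕ} (hW : ∀ j ≤ k, Measurable (W j)) (r : ℝ) :
    MeasurableSet (disjointed (fun j => {ω | r < |W j ω|}) k) := by
  rw [disjointed_eq_inter_compl]
  exact ((hW k le_rfl).abs measurableSet_Ioi).inter <| MeasurableSet.iInter fun j =>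
    MeasurableSet.iInter fun hj => ((hW j hj.le).abs measurableSet_Ioi).compl

lemma measure_le_two_mul_measure_inter {Ω : Type*} {m : MeasurableSpace Ω} {P : Measure Ω}
    {A B D : Set Ω} (hAD : P (A ∩ D) = P A * P D) (hD : 2⁻¹ ≤ P D) (hADB : A ∩ D ⊆ B) :
    P A ≤ 2 * P (A ∩ B) :=
  calc P A = 2 * (2⁻¹ * P A) := by
        rw [← mul_assoc, ENNReal.mul_inv_cancel two_ne_zero ENNReal.ofNat_ne_top, one_mul]
    _ ≤ 2 * P (A ∩ D) := by rw [hAD, mul_comm (P A)]; gcongr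
    _ ≤ 2 * P (A ∩ B) :=
        mul_le_mul_right (measure_mono (Set.subset_inter Set.inter_subset_left hADB)) 2

section

variable {Ω : Type*} [MeasurableSpace Ω] {P : Measure Ω} {Z : ℕ → Ω → ℝ}

lemma integral_abs_sum_Icc_mul_le (hZ : ∀ i, Integrable (Z i) P)
    {a : ℕ → ℝ} (ha : AntitoneOn a (Set.Ici 1)) (ha0 : ∀ j, 0 ≤ a j) {k : ℕ} {K : ℝ}
    (hK : ∀ j ≤ k, ∫ ω, |∑ i ∈ Icc 1 j, Z i ω| ∂P ≤ K) :
    ∫ ω, |∑ j ∈ Icc 1 k, a j * Z j ω| ∂P ≤ a 1 * K := by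
  have hT : ∀ j, Integrable (fun ω => |∑ i ∈ Icc 1 j, Z i ω|) P := fun j =>
    (integrable_finsetSum _ fun i _ => hZ i).abs
  calc ∫ ω, |∑ j ∈ Icc 1 k, a j * Z j ω| ∂P
      ≤ ∫ ω, (∑ j ∈ Icc 1 k, (a j - a (j + 1)) * |∑ i ∈ Icc 1 j, Z i ω| +
          a (k + 1) * |∑ i ∈ Icc 1 k, Z i ω|) ∂P :=
        integral_mono (integrable_finsetSum _ fun j _ => (hZ j).const_mul (a j)).abs
          ((integrable_finsetSum _ fun j _ => (hT j).const_mul _).add ((hT k).const_mul _))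
          fun ω => abs_sum_Icc_mul_le ha ha0 (fun j => Z j ω) k
    _ = ∑ j ∈ Icc 1 k, (a j - a (j + 1)) * ∫ ω, |∑ i ∈ Icc 1 j, Z i ω| ∂P +
          a (k + 1) * ∫ ω, |∑ i ∈ Icc 1 k, Z i ω| ∂P := by
        rw [integral_add (integrable_finsetSum _ fun j _ => (hT j).const_mul _)
          ((hT k).const_mul _), integral_finsetSum _ fun j _ => (hT j).const_mul _]
        simp only [integral_const_mul]
    _ ≤ ∑ j ∈ Icc 1 k, (a j - a (j + 1)) * K + a (k + 1) * K := by
        gcongr with j hj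
        · exact sub_succ_nonneg_of_antitoneOn ha (mem_Icc.1 hj).1
        · exact hK j (mem_Icc.1 hj).2
        · exact ha0 _
        · exact hK k le_rfl
    _ = a 1 * K := by rw [← sum_mul, ← add_mul, sum_Icc_sub_succ_add]

lemma integral_abs_sum_Icc_sub_le {Y : ℕ → Ω → ℝ} {μ : ℝ} {d : ℕ → ℝ}
    (hd : ∀ n, 0 < d n) {M : ℝ} (hM : 0 < M) (hdM : ∀ j m, j ≤ m → d j ≤ M * d m)
    {g : ℕ → ℝ} (hg : Monotone g)
    (hmom : ∀ j, 1 ≤ j → ∫ ω, |(∑ i ∈ Icc 1 j, Y i ω - μ * j) / d j| ∂P ≤ g j)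
    {n : ℕ} (hn : 1 ≤ n) (j : ℕ) (hjn : j ≤ n) :
    ∫ ω, |∑ i ∈ Icc 1 j, (Y i ω - μ)| ∂P ≤ M * d n * g n := by
  rcases Nat.eq_zero_or_pos j with rfl | hj
  · have hg0 : 0 ≤ g n :=
      ((integral_nonneg fun _ => abs_nonneg _).trans (hmom 1 le_rfl)).trans (hg hn)
    simpa using mul_nonneg (mul_pos hM (hd n)).le hg0
  have hsum : ∀ ω,
      |∑ i ∈ Icc 1 j, (Y i ω - μ)| = d j * |(∑ i ∈ Icc 1 j, Y i ω - μ * j) / d j| := by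
    intro ω
    rw [abs_div, abs_of_pos (hd j), mul_div_cancel₀ _ (hd j).ne', sum_sub_distrib, sum_const,
      Nat.card_Icc, add_tsub_cancel_right, nsmul_eq_mul, mul_comm]
  simp_rw [hsum, integral_const_mul]
  exact mul_le_mul (hdM j n hjn) ((hmom j hj).trans (hg hjn))
    (integral_nonneg fun _ => abs_nonneg _) (mul_pos hM (hd n)).le

lemma measure_inter_eq_mul_of_iIndepFun (hZ : ∀ i, Measurable (Z i)) (hind : iIndepFun Z P)
    (k : ℕ) {A D : Set Ω}
    (hA : MeasurableSet[⨆ i ∈ Set.Iic k, MeasurableSpace.comap (Z i) inferInstance] A)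
    (hD : MeasurableSet[⨆ i ∈ Set.Ioi k, MeasurableSpace.comap (Z i) inferInstance] D) :
    P (A ∩ D) = P A * P D :=
  (Indep_iff _ _ P).1 (indep_iSup_of_disjoint (fun i => (hZ i).comap_le) hind.iIndep
    (Set.Iic_disjoint_Ioi le_rfl)) A D hA hD

theorem measure_exists_abs_sum_Icc_gt_le [IsProbabilityMeasure P] (hZ : ∀ i, Measurable (Z i))
    (hind : iIndepFun Z P) {n : ℕ} {s t : ℝ}
    (hs : ∀ k ≤ n, 2⁻¹ ≤ P {ω | |∑ j ∈ Ioc k n, Z j ω| < s}) :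
    P {ω | ∃ k ≤ n, t + s < |∑ j ∈ Icc 1 k, Z j ω|} ≤
      2 * P {ω | t < |∑ j ∈ Icc 1 n, Z j ω|} := by
  set W : ℕ → Ω → ℝ := fun k ω => ∑ j ∈ Icc 1 k, Z j ω
  set E : ℕ → Set Ω := fun k => {ω | t + s < |W k ω|}
  set G := {ω | t < |W n ω|}
  set σZ : ℕ → MeasurableSpace Ω := fun i => MeasurableSpace.comap (Z i) inferInstance
  have hZσ {i} {S : Set ℕ} (hi : i ∈ S) : Measurable[⨆ i ∈ S, σZ i] (Z i) :=
    measurable_iff_comap_le.2 (le_biSup σZ hi)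
  have hE_past : ∀ k, MeasurableSet[⨆ i ∈ Set.Iic k, σZ i] (disjointed E k) := fun k =>
    measurableSet_disjointed_lt_abs (fun j hj => Finset.measurable_sum _ fun i hi =>
      hZσ (Set.mem_Iic.2 ((mem_Icc.1 hi).2.trans hj))) _
  have hE : ∀ k, MeasurableSet (disjointed E k) := fun k =>
    iSup₂_le (fun i _ => (hZ i).comap_le) _ (hE_past k)
  -- `disjointed E k` is the event that `|W|` first exceeds `t + s` at time `k`; it depends on the
  -- past only, and on it a small future increment `W n - W k` forces `|W n| > t`.
  have hkey : ∀ k ≤ n, P (disjointed E k) ≤ 2 * P (disjointed E k ∩ G) := by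
    intro k hk
    have hD : MeasurableSet[⨆ i ∈ Set.Ioi k, σZ i] {ω | |∑ j ∈ Ioc k n, Z j ω| < s} :=
      measurable_abs.comp (Finset.measurable_sum _ fun i hi =>
        hZσ (Set.mem_Ioi.2 (mem_Ioc.1 hi).1)) measurableSet_Iio
    refine measure_le_two_mul_measure_inter
      (measure_inter_eq_mul_of_iIndepFun hZ hind k (hE_past k) hD) (hs k hk) ?_
    rintro ω ⟨hωE, hωD : |∑ j ∈ Ioc k n, Z j ω| < s⟩
    have hWn : W n ω = W k ω + ∑ j ∈ Ioc k n, Z j ω := (sum_Icc_one_add_sum_Ioc _ hk).symm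
    have h := abs_sub_abs_le_abs_sub (W k ω) (W n ω)
    rw [hWn, sub_add_cancel_left, abs_neg] at h
    show t < |W n ω|
    rw [hWn]
    linarith [show t + s < |W k ω| from disjointed_subset E k hωE]
  have hG : MeasurableSet G :=
    measurableSet_lt measurable_const (Finset.measurable_sum _ fun i _ => hZ i).abs
  calc P {ω | ∃ k ≤ n, t + s < |W k ω|} = P (⋃ k ∈ Iic n, disjointed E k) := by
        rw [biUnion_Iic_disjointed, partialSups_eq_biSup]
        congr 1; ext ω; simp [E]
    _ ≤ ∑ k ∈ Iic n, P (disjointed E k) := measure_biUnion_finset_le _ _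
    _ ≤ ∑ k ∈ Iic n, 2 * P (disjointed E k ∩ G) :=
        sum_le_sum fun k hk => hkey k (mem_Iic.1 hk)
    _ = 2 * P (⋃ k ∈ Iic n, disjointed E k ∩ G) := by
        rw [← mul_sum, measure_biUnion_finset (f := fun k => disjointed E k ∩ G)
          (fun i _ j _ hij => (disjoint_disjointed E hij).mono inf_le_left inf_le_left)
          fun k _ => (hE k).inter hG]
    _ ≤ 2 * P G := by gcongr; exact Set.iUnion₂_subset fun _ _ => Set.inter_subset_right

lemma inv_two_le_measure_abs_lt [IsProbabilityMeasure P] {V : Ω → ℝ} (hV : Measurable V)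
    (hVi : Integrable V P) {s : ℝ} (hs : 0 < s) (hVs : 2 * ∫ ω, |V ω| ∂P ≤ s) :
    2⁻¹ ≤ P {ω | |V ω| < s} := by
  have hmarkov : P {ω | s ≤ |V ω|} ≤ 2⁻¹ := by
    have h := mul_meas_ge_le_integral_of_nonneg (ae_of_all _ fun ω => abs_nonneg (V ω))
      hVi.abs s
    have : P.real {ω | s ≤ |V ω|} ≤ 2⁻¹ := by nlinarith
    rw [← ofReal_measureReal]
    simpa using ENNReal.ofReal_le_ofReal this
  have hcompl : {ω | |V ω| < s} = {ω | s ≤ |V ω|}ᶜ := by ext; simp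
  rw [hcompl, prob_compl_eq_one_sub (measurableSet_le measurable_const hV.abs)]
  refine ENNReal.le_sub_of_add_le_right (measure_ne_top _ _) ?_
  calc 2⁻¹ + P {ω | s ≤ |V ω|} ≤ 2⁻¹ + 2⁻¹ := by gcongr
    _ = 1 := ENNReal.inv_two_add_inv_two

lemma lintegral_ofReal_sub_le_of_measure_lt_le {F G : Ω → ℝ} (hF : AEMeasurable F P)
    (hG : AEMeasurable G P) (hG0 : 0 ≤ᵐ[P] G) (s : ℝ) (C : ℝ≥0∞)
    (htail : ∀ t > 0, P {ω | t + s < F ω} ≤ C * P {ω | t < G ω}) :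
    ∫⁻ ω, ENNReal.ofReal (F ω - s) ∂P ≤ C * ∫⁻ ω, ENNReal.ofReal (G ω) ∂P := by
  have hG_tail : Measurable fun t : ℝ => P {ω | t < G ω} :=
    Antitone.measurable fun _ _ h => measure_mono fun _ hω => lt_of_le_of_lt h hω
  calc ∫⁻ ω, ENNReal.ofReal (F ω - s) ∂P
        = ∫⁻ ω, ENNReal.ofReal (max (F ω - s) 0) ∂P := by
        simp only [ENNReal.ofReal_max, ENNReal.ofReal_zero, _root_.max_zero]
    _ = ∫⁻ t in Set.Ioi 0, P {ω | t < max (F ω - s) 0} :=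
        lintegral_eq_lintegral_meas_lt P (ae_of_all _ fun _ => le_max_right _ _)
          ((hF.sub_const s).max aemeasurable_const)
    _ ≤ ∫⁻ t in Set.Ioi 0, C * P {ω | t < G ω} := by
        refine setLIntegral_mono (hG_tail.const_mul C) fun t (ht : 0 < t) => ?_
        have : {ω | t < max (F ω - s) 0} = {ω | t + s < F ω} := by
          ext ω; simp [ht.not_gt, lt_sub_iff_add_lt]
        exact this ▸ htail t ht
    _ = C * ∫⁻ ω, ENNReal.ofReal (G ω) ∂P := by
        rw [lintegral_const_mul C hG_tail, lintegral_eq_lintegral_meas_lt P hG0 hG]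

lemma integral_le_add_two_mul_integral_of_measure_lt_le [IsProbabilityMeasure P] {F G : Ω → ℝ}
    (hF : Measurable F) (hF0 : ∀ ω, 0 ≤ F ω) (hG : Integrable G P) (hG0 : ∀ ω, 0 ≤ G ω)
    {s : ℝ} (hs : 0 ≤ s)
    (htail : ∀ t > 0, P {ω | t + s < F ω} ≤ 2 * P {ω | t < G ω}) :
    ∫ ω, F ω ∂P ≤ s + 2 * ∫ ω, G ω ∂P := by
  have hGint : 0 ≤ 2 * ∫ ω, G ω ∂P := mul_nonneg zero_le_two (integral_nonneg fun ω => hG0 ω)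
  have hlint :
      ∫⁻ ω, ENNReal.ofReal (F ω) ∂P ≤ ENNReal.ofReal (s + 2 * ∫ ω, G ω ∂P) :=
    calc ∫⁻ ω, ENNReal.ofReal (F ω) ∂P
        ≤ ∫⁻ ω, (ENNReal.ofReal s + ENNReal.ofReal (F ω - s)) ∂P :=
          lintegral_mono fun ω => by
            simpa only [add_sub_cancel] using ENNReal.ofReal_add_le (p := s) (q := F ω - s)
      _ = ENNReal.ofReal s + ∫⁻ ω, ENNReal.ofReal (F ω - s) ∂P := by
          rw [lintegral_add_left measurable_const, lintegral_const, measure_univ, mul_one]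
      _ ≤ ENNReal.ofReal s + 2 * ∫⁻ ω, ENNReal.ofReal (G ω) ∂P := by
          gcongr
          exact lintegral_ofReal_sub_le_of_measure_lt_le hF.aemeasurable hG.aemeasurable
            (ae_of_all _ hG0) s 2 htail
      _ = ENNReal.ofReal (s + 2 * ∫ ω, G ω ∂P) := by
          rw [← ofReal_integral_eq_lintegral_ofReal hG (ae_of_all _ hG0),
            ENNReal.ofReal_add hs hGint, ENNReal.ofReal_mul zero_le_two,
            ENNReal.ofReal_ofNat]
  rw [integral_eq_lintegral_of_nonneg_ae (ae_of_all _ hF0) hF.aestronglyMeasurable]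
  exact ENNReal.toReal_le_of_le_ofReal (add_nonneg hs hGint) hlint

theorem integral_sup'_abs_sum_Icc_le [IsProbabilityMeasure P] (hZ : ∀ i, Measurable (Z i))
    (hZi : ∀ i, Integrable (Z i) P) (hind : iIndepFun Z P) {n : ℕ} (hn : 1 ≤ n) {B : ℝ}
    (hB : 0 < B) (hWB : ∀ k ≤ n, ∫ ω, |∑ j ∈ Icc 1 k, Z j ω| ∂P ≤ B) :
    ∫ ω, (Icc 1 n).sup' (nonempty_Icc.2 hn) (fun k => |∑ j ∈ Icc 1 k, Z j ω|) ∂P ≤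
      6 * B := by
  set W : ℕ → Ω → ℝ := fun k ω => ∑ j ∈ Icc 1 k, Z j ω
  set F : Ω → ℝ := fun ω => (Icc 1 n).sup' (nonempty_Icc.2 hn) fun k => |W k ω|
  have hW : ∀ k, Measurable (W k) := fun k => Finset.measurable_sum _ fun i _ => hZ i
  have hWi : ∀ k, Integrable (W k) P := fun k => integrable_finsetSum _ fun i _ => hZi i
  have hincr : ∀ k ≤ n, 2⁻¹ ≤ P {ω | |∑ j ∈ Ioc k n, Z j ω| < 4 * B} := by
    intro k hk
    have hsub : ∀ ω, ∑ j ∈ Ioc k n, Z j ω = W n ω - W k ω := fun ω => by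
      rw [eq_sub_iff_add_eq', sum_Icc_one_add_sum_Ioc _ hk]
    refine inv_two_le_measure_abs_lt (Finset.measurable_sum _ fun i _ => hZ i)
      (integrable_finsetSum _ fun i _ => hZi i) (by positivity) ?_
    calc 2 * ∫ ω, |∑ j ∈ Ioc k n, Z j ω| ∂P ≤ 2 * ∫ ω, (|W n ω| + |W k ω|) ∂P :=
          mul_le_mul_of_nonneg_left (integral_mono (integrable_finsetSum _ fun i _ => hZi i).abs
            ((hWi n).abs.add (hWi k).abs) fun ω => by
              simpa only [hsub] using abs_sub (W n ω) (W k ω)) zero_le_two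
      _ ≤ 4 * B := by
          rw [integral_add (hWi n).abs (hWi k).abs]
          linarith [hWB n le_rfl, hWB k hk]
  have htail : ∀ t > 0, P {ω | t + 4 * B < F ω} ≤ 2 * P {ω | t < |W n ω|} := by
    refine fun t _ => (measure_mono fun ω hω => ?_).trans
      (measure_exists_abs_sum_Icc_gt_le hZ hind hincr)
    obtain ⟨k, hk, hlt⟩ := (lt_sup'_iff _).1 (show t + 4 * B < F ω from hω)
    exact ⟨k, (mem_Icc.1 hk).2, hlt⟩
  have hF : Measurable F := by
    convert Finset.measurable_sup' (nonempty_Icc.2 hn) fun k _ => (hW k).abs using 1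
    ext ω
    simp only [F, Finset.sup'_apply]
  have hF0 : ∀ ω, 0 ≤ F ω := fun ω =>
    (abs_nonneg _).trans (le_sup' (fun k => |W k ω|) (right_mem_Icc.2 hn))
  calc ∫ ω, F ω ∂P ≤ 4 * B + 2 * ∫ ω, |W n ω| ∂P :=
        integral_le_add_two_mul_integral_of_measure_lt_le hF hF0 (hWi n).abs
          (fun ω => abs_nonneg _) (by positivity) htail
    _ ≤ 6 * B := by linarith [hWB n le_rfl]

end

theorem stmt3_general
    {Ω : Type*} [MeasurableSpace Ω] (P : Measure Ω) [IsProbabilityMeasure P]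
    (Y : ℕ → Ω → ℝ) (hYmeas : ∀ n, Measurable (Y n)) (hYint : ∀ n, Integrable (Y n) P)
    (hindep : iIndepFun Y P)
    (μ : ℝ) (S : ℕ → Ω → ℝ) (hS : ∀ n ω, S n ω = ∑ k ∈ Finset.Icc 1 n, Y k ω)
    (d : ℕ → ℝ) (hd : ∀ n, 0 < d n)
    (c γ : ℝ) (hc : 0 < c) (hγ : 0 < γ) (n₀ : ℕ)
    (hratio : ∀ k l : ℕ, n₀ ≤ k → k ≤ l → c * ((l : ℝ) / (k : ℝ)) ^ γ ≤ d l / d k)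
    (C₀ γ' ε : ℝ) (hC₀ : 0 < C₀) (hγ' : γ' ∈ Set.Ioo 0 γ) (hε : ε ∈ Set.Ioo (0 : ℝ) 1)
    (hmom : ∀ n : ℕ, 1 ≤ n →
      ∫ ω, |(S n ω - μ * n) / d n| ∂P ≤ C₀ * Real.exp (γ' * clog n ^ (1 - ε))) :
    ∃ C : ℝ, 0 < C ∧ ∀ (n : ℕ) (hn : 1 ≤ n),
      ∫ ω, (1 / d n) * ((Finset.Icc 1 n).sup' (Finset.nonempty_Icc.mpr hn)
          fun k => |∑ j ∈ Finset.Icc 1 k, clog (((n : ℝ) + 1) / j) * (Y j ω - μ)|) ∂P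
        ≤ C * clog n * Real.exp (γ' * clog n ^ (1 - ε)) := by
  obtain ⟨M, hM, hdM⟩ := exists_pos_forall_le_mul_of_rpow_le_div hd hc hγ.le hratio
  obtain rfl : S = fun n ω => ∑ k ∈ Icc 1 n, Y k ω := funext fun n => funext (hS n)
  set g : ℕ → ℝ := fun j => C₀ * Real.exp (γ' * clog j ^ (1 - ε))
  have hg : Monotone g := fun i j hij => mul_le_mul_of_nonneg_left
    (exp_mul_clog_rpow_le hγ'.1.le hε.2.le (Nat.cast_le.2 hij)) hC₀.le
  refine ⟨12 * M * C₀, by positivity, fun n hn => ?_⟩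
  set K := M * d n * g n
  have hK : 0 < K := mul_pos (mul_pos hM (hd n)) (mul_pos hC₀ (Real.exp_pos _))
  set a : ℕ → ℝ := fun j => clog ((n + 1) / j)
  have hW : ∀ k ≤ n, ∫ ω, |∑ j ∈ Icc 1 k, a j * (Y j ω - μ)| ∂P ≤ a 1 * K := by
    intro k hk
    exact integral_abs_sum_Icc_mul_le (fun i => (hYint i).sub (integrable_const μ))
      (antitoneOn_clog_div (by positivity)) (fun j => zero_le_one.trans (one_le_clog _))
      fun j hj => integral_abs_sum_Icc_sub_le hd hM hdM hg hmom hn j (hj.trans hk)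
  have hmax := integral_sup'_abs_sum_Icc_le (Z := fun j ω => a j * (Y j ω - μ))
    (fun j => ((hYmeas j).sub_const μ).const_mul (a j))
    (fun j => ((hYint j).sub (integrable_const μ)).const_mul (a j))
    (hindep.comp (fun j x => a j * (x - μ)) fun j => (measurable_id.sub_const μ).const_mul (a j))
    hn (mul_pos (zero_lt_one.trans_le (one_le_clog _)) hK) hW
  have ha1 : a 1 ≤ 2 * clog n := by simpa [a] using clog_add_one_le n
  rw [integral_const_mul]
  calc 1 / d n * ∫ ω, (Icc 1 n).sup' (nonempty_Icc.2 hn)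
          (fun k => |∑ j ∈ Icc 1 k, a j * (Y j ω - μ)|) ∂P
      ≤ 1 / d n * (6 * (a 1 * K)) := mul_le_mul_of_nonneg_left hmax (one_div_pos.2 (hd n)).le
    _ ≤ 1 / d n * (6 * (2 * clog n * K)) := by have := hd n; gcongr
    _ = 12 * M * C₀ * clog n * Real.exp (γ' * clog n ^ (1 - ε)) := by
        field_simp [(hd n).ne']; ring

/-- **Lemma 3 (full).** Under the growth condition on `(d n)` and the moment bound
`E|(S n - μ n)/d n| ≤ C₀ exp(γ' (log n)^{1-ε})`, there is `C > 0` with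
`E[(1/d n) max_{1 ≤ k ≤ n} |∑_{j=1}^k log((n+1)/j)(Y j - μ)|] ≤ C log n · exp(γ' (log n)^{1-ε})`
for all `n ≥ 1`. -/
theorem stmt3
    {Ω : Type*} [MeasurableSpace Ω] (P : Measure Ω) [IsProbabilityMeasure P]
    (Y : ℕ → Ω → ℝ) (hYmeas : ∀ n, Measurable (Y n)) (hYint : ∀ n, Integrable (Y n) P)
    (hindep : iIndepFun Y P)
    (μ : ℝ) (S : ℕ → Ω → ℝ) (hS : ∀ n ω, S n ω = ∑ k ∈ Finset.Icc 1 n, Y k ω)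
    (d : ℕ → ℝ) (hd : ∀ n, 0 < d n)
    (c γ : ℝ) (hc : 0 < c) (hγ : 0 < γ) (n₀ : ℕ) (hn₀ : 1 ≤ n₀)
    (hratio : ∀ k l : ℕ, n₀ ≤ k → k ≤ l → c * ((l : ℝ) / (k : ℝ)) ^ γ ≤ d l / d k)
    (C₀ γ' ε : ℝ) (hC₀ : 0 < C₀) (hγ' : γ' ∈ Set.Ioo 0 γ) (hε : ε ∈ Set.Ioo (0 : ℝ) 1)
    (hmom : ∀ n : ℕ, 1 ≤ n →
      ∫ ω, |(S n ω - μ * n) / d n| ∂P ≤ C₀ * Real.exp (γ' * clog n ^ (1 - ε))) :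
    ∃ C : ℝ, 0 < C ∧ ∀ (n : ℕ) (hn : 1 ≤ n),
      ∫ ω, (1 / d n) * ((Finset.Icc 1 n).sup' (Finset.nonempty_Icc.mpr hn)
          fun k => |∑ j ∈ Finset.Icc 1 k, clog (((n : ℝ) + 1) / j) * (Y j ω - μ)|) ∂P
        ≤ C * clog n * Real.exp (γ' * clog n ^ (1 - ε)) :=
  stmt3_general P Y hYmeas hYint hindep μ S hS d hd c γ hc hγ n₀ hratio C₀ γ' ε hC₀ hγ' hε hmom
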